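/- Let E be a real Banach space, let t₀ < t₁ be real numbers and write Δt = t₁ − t₀. Let φ : ℝ → E be Bochner integrable on [t₀,t₁] with s ↦ ‖φ(s)‖² integrable on [t₀,t₁], and let g : ℝ → E satisfy g(t) = g(t₀) + ∫_{t₀}^{t} φ(s) ds for all t ∈ [t₀,t₁]. Then ‖g(t₁) − (Δt)⁻¹·∫_{t₀}^{t₁} g(s) ds‖² ≤ Δt·∫_{t₀}^{t₁} ‖φ(s)‖² ds. -/

import Mathlib

/-!
`g t₁ - ⨍ g` is the mean over `s` of `g t₁ - g s = ∫ s..t₁, φ`, each of norm at most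
`∫ t₀..t₁, ‖φ‖`; by Cauchy–Schwarz the square of this is at most
`(t₁ - t₀) * ∫ t₀..t₁, ‖φ‖ ^ 2`.
-/

open MeasureTheory Set

theorem sq_integral_le_measureReal_mul_integral_sq {α : Type*} [MeasurableSpace α]
    {μ : Measure α} [IsFiniteMeasure μ] {f : α → ℝ} (hf : MemLp f 2 μ) :
    (∫ x, f x ∂μ) ^ 2 ≤ μ.real univ * ∫ x, f x ^ 2 ∂μ := by
  rcases eq_zero_or_neZero μ with rfl | hμ
  · simp
  have hjensen : (⨍ x, f x ∂μ) ^ 2 ≤ ⨍ x, f x ^ 2 ∂μ :=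
    (even_two.convexOn_pow).map_average_le (continuous_pow 2).continuousOn isClosed_univ
      (ae_of_all _ fun _ => mem_univ _) (hf.integrable one_le_two) hf.integrable_sq
  have hc : 0 < μ.real univ := measureReal_univ_pos
  rw [average_eq, average_eq, smul_eq_mul, smul_eq_mul, mul_pow, inv_pow,
    inv_mul_le_iff₀ (pow_pos hc 2)] at hjensen
  calc _ ≤ _ := hjensen
    _ = _ := by field_simp

theorem sq_intervalIntegral_le_mul_intervalIntegral_sq {f : ℝ → ℝ} {a b : ℝ} (hab : a ≤ b)
    (hf : AEStronglyMeasurable f (volume.restrict (Ioc a b)))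
    (hf2 : IntegrableOn (fun x => f x ^ 2) (Ioc a b)) :
    (∫ x in a..b, f x) ^ 2 ≤ (b - a) * ∫ x in a..b, f x ^ 2 := by
  simpa [intervalIntegral.integral_of_le hab, hab] using
    sq_integral_le_measureReal_mul_integral_sq ((memLp_two_iff_integrable_sq hf).2 hf2)

section Interval

variable {E : Type*} [NormedAddCommGroup E] [NormedSpace ℝ E] {φ g : ℝ → E} {a b : ℝ}

theorem norm_sub_interval_average_le [CompleteSpace E] {B : ℝ} (hab : a < b)
    (hg : IntervalIntegrable g volume a b) (c : E) (hB : ∀ x ∈ Ioc a b, ‖c - g x‖ ≤ B) :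
    ‖c - ⨍ x in a..b, g x‖ ≤ B := by
  have hpos : 0 < b - a := sub_pos.2 hab
  have hmean : c - ⨍ x in a..b, g x = ⨍ x in a..b, (c - g x) := by
    rw [interval_average_eq, interval_average_eq,
      intervalIntegral.integral_sub intervalIntegrable_const hg, intervalIntegral.integral_const,
      smul_sub, smul_smul, inv_mul_cancel₀ hpos.ne', one_smul]
  have hint : ‖∫ x in a..b, (c - g x)‖ ≤ B * |b - a| :=
    intervalIntegral.norm_integral_le_of_norm_le_const fun x hx => hB x (uIoc_of_le hab.le ▸ hx)
  rw [hmean, interval_average_eq, norm_smul, norm_inv, Real.norm_eq_abs, abs_of_pos hpos,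
    inv_mul_le_iff₀ hpos]
  rwa [abs_of_pos hpos, mul_comm] at hint

theorem continuousOn_of_eq_add_primitive (hab : a ≤ b) (hφ : IntegrableOn φ (Icc a b))
    (hg : ∀ t ∈ Icc a b, g t = g a + ∫ s in a..t, φ s) : ContinuousOn g (Icc a b) := by
  have hprim := intervalIntegral.continuousOn_primitive_interval (uIcc_of_le hab ▸ hφ)
  rw [uIcc_of_le hab] at hprim
  exact (continuousOn_const.add hprim).congr hg

theorem norm_sub_le_integral_norm_of_eq_add_primitive (hφ : IntervalIntegrable φ volume a b)
    (hg : ∀ t ∈ Icc a b, g t = g a + ∫ s in a..t, φ s) {s : ℝ} (hs : s ∈ Icc a b) :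
    ‖g b - g s‖ ≤ ∫ x in a..b, ‖φ x‖ := by
  have hab : a ≤ b := hs.1.trans hs.2
  have hφs : IntervalIntegrable φ volume a s :=
    hφ.mono_set (uIcc_subset_uIcc left_mem_uIcc (uIcc_of_le hab ▸ hs))
  rw [hg b (right_mem_Icc.2 hab), hg s hs, add_sub_add_left_eq_sub,
    intervalIntegral.integral_interval_sub_left hφ hφs]
  calc ‖∫ x in s..b, φ x‖ ≤ ∫ x in s..b, ‖φ x‖ :=
        intervalIntegral.norm_integral_le_integral_norm hs.2
    _ ≤ ∫ x in a..b, ‖φ x‖ :=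
      intervalIntegral.integral_mono_interval hs.1 hs.2 le_rfl
        (ae_of_all _ fun _ => norm_nonneg _) hφ.norm

end Interval

theorem stmt16 {E : Type*} [NormedAddCommGroup E] [NormedSpace ℝ E] [CompleteSpace E]
    (t₀ t₁ : ℝ) (ht : t₀ < t₁) (φ g : ℝ → E)
    (hφ : IntegrableOn φ (Set.Icc t₀ t₁) volume)
    (hφ2 : IntegrableOn (fun s => ‖φ s‖ ^ 2) (Set.Icc t₀ t₁) volume)
    (hg : ∀ t ∈ Set.Icc t₀ t₁, g t = g t₀ + ∫ s in t₀..t, φ s) :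
    ‖g t₁ - (t₁ - t₀)⁻¹ • ∫ s in t₀..t₁, g s‖ ^ 2
      ≤ (t₁ - t₀) * ∫ s in t₀..t₁, ‖φ s‖ ^ 2 := by
  have hφi : IntervalIntegrable φ volume t₀ t₁ :=
    (intervalIntegrable_iff_integrableOn_Icc_of_le ht.le).2 hφ
  have hgi : IntervalIntegrable g volume t₀ t₁ :=
    (intervalIntegrable_iff_integrableOn_Icc_of_le ht.le).2
      (continuousOn_of_eq_add_primitive ht.le hφ hg).integrableOn_Icc
  have hdev : ‖g t₁ - ⨍ s in t₀..t₁, g s‖ ≤ ∫ s in t₀..t₁, ‖φ s‖ :=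
    norm_sub_interval_average_le ht hgi _ fun s hs =>
      norm_sub_le_integral_norm_of_eq_add_primitive hφi hg (Ioc_subset_Icc_self hs)
  rw [← interval_average_eq]
  calc _ ≤ (∫ s in t₀..t₁, ‖φ s‖) ^ 2 := pow_le_pow_left₀ (norm_nonneg _) hdev 2
    _ ≤ _ := sq_intervalIntegral_le_mul_intervalIntegral_sq ht.le
        (hφ.mono_set Ioc_subset_Icc_self).1.norm (hφ2.mono_set Ioc_subset_Icc_self)
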